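/- Let 𝖠 be a graded simple algebra, finite-dimensional over a graded field 𝖪, and let 𝖨 ⊆ 𝖠 be a homogeneous right ideal. Then there is a homogeneous idempotent e ∈ 𝖠 of degree 0 such that 𝖨 = e𝖠. -/

import Mathlib

/-!
Right ideals of `A` are `K`-submodules, and a homogeneous one is determined by its elements in
the finitely many degrees `d i` of a homogeneous `K`-spanning family `v i` of `A`: a nonzero
homogeneous element is moved into one of these degrees by a homogeneous unit of `K`. These
pieces are finite-dimensional over the field `𝒦 0`, since each `𝒦 γ` is at most one-dimensional
over it, so homogeneous right ideals satisfy the descending chain condition.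

In a minimal nonzero homogeneous right ideal `M`, graded simplicity provides a homogeneous
`x ∈ M` with `x * M ≠ 0`. Minimality gives `x * M = M`, so `x = x * e` with `e ∈ M`, and forces
`y ↦ x * y` to be injective on `M`; hence `e` is a left identity of `M`, and so is its degree-`0`
component, a nonzero idempotent. Finally take a degree-`0` idempotent `e ∈ I` for which
`{y ∈ I | e * y = 0}` is minimal. If it were nonzero it would contain a nonzero degree-`0`
idempotent `f`, and `e + f - f * e` would make it smaller; so it is zero and `I = e * A`.
-/

set_option autoImplicit false

noncomputable section

namespace PaperVal

open DirectSum Module Submodule Set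

section Ring

variable {A : Type} [Ring A]

theorem IsIdempotentElem.add_sub_mul_of_mul_eq_zero {e f : A} (he : IsIdempotentElem e)
    (hf : IsIdempotentElem f) (hef : e * f = 0) : IsIdempotentElem (e + f - f * e) := by
  have hefe : e * (f * e) = 0 := by rw [← mul_assoc, hef, zero_mul]
  have hfe : f * e * e = f * e := by rw [mul_assoc, he.eq]
  have hffe : f * (f * e) = f * e := by rw [← mul_assoc, hf.eq]
  have hfef : f * e * f = 0 := by rw [mul_assoc, hef, mul_zero]
  have hfefe : f * e * (f * e) = 0 := by rw [← mul_assoc, hfef, zero_mul]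
  simp only [IsIdempotentElem, mul_add, add_mul, mul_sub, sub_mul, he.eq, hf.eq, hef, hefe, hfe,
    hffe, hfef, hfefe]
  abel

theorem mem_iff_exists_eq_mul_of_inf_ker_eq_bot {I : AddSubgroup A}
    (hI : ∀ ⦃x⦄, x ∈ I → ∀ a, x * a ∈ I) {e : A} (heI : e ∈ I) (he : IsIdempotentElem e)
    (h : I ⊓ (AddMonoidHom.mulLeft e).ker = ⊥) (x : A) : x ∈ I ↔ ∃ a, x = e * a := by
  refine ⟨fun hx => ⟨x, ?_⟩, fun ⟨a, hxa⟩ => hxa ▸ hI heI a⟩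
  have hmem : x - e * x ∈ I ⊓ (AddMonoidHom.mulLeft e).ker :=
    ⟨I.sub_mem hx (hI heI x), by simp [mul_sub, ← mul_assoc, he.eq]⟩
  rwa [h, AddSubgroup.mem_bot, sub_eq_zero] at hmem

end Ring

section GradedRing

variable {Γ A : Type} [AddCommGroup Γ] [DecidableEq Γ] [Ring A]
  (𝒜 : Γ → AddSubgroup A) [GradedRing 𝒜]

theorem mul_eq_zero_of_forall_decompose_mul {x z : A}
    (h : ∀ γ, (decompose 𝒜 x γ : A) * z = 0) : x * z = 0 := by
  classical
  rw [← sum_support_decompose 𝒜 x, Finset.sum_mul]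
  exact Finset.sum_eq_zero fun γ _ => h γ

theorem decompose_zero_mul_of_forall_mul_eq_self {M : AddSubgroup A}
    (hM : SetLike.IsHomogeneous 𝒜 M) {e : A} (he : ∀ y ∈ M, e * y = y) :
    ∀ y ∈ M, (decompose 𝒜 e 0 : A) * y = y := by
  classical
  intro y hy
  have homogeneous : ∀ δ, (decompose 𝒜 e 0 : A) * decompose 𝒜 y δ = decompose 𝒜 y δ := by
    intro δ
    have := coe_decompose_mul_add_of_right_mem 𝒜 (i := 0) (a := e) (decompose 𝒜 y δ).2
    rwa [zero_add, he _ (hM δ hy), decompose_of_mem_same 𝒜 (decompose 𝒜 y δ).2, eq_comm] at this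
  rw [← sum_support_decompose 𝒜 y, Finset.mul_sum]
  exact Finset.sum_congr rfl fun δ _ => homogeneous δ

def IsGradedSimple : Prop :=
  Nontrivial A ∧ ∀ S : AddSubgroup A, SetLike.IsHomogeneous 𝒜 S →
    (∀ a, ∀ x ∈ S, a * x ∈ S) → (∀ a, ∀ x ∈ S, x * a ∈ S) → S = ⊥ ∨ S = ⊤

structure IsHomogeneousRightIdeal (I : AddSubgroup A) : Prop where
  isHomogeneous : SetLike.IsHomogeneous 𝒜 I
  mul_mem_right : ∀ ⦃x⦄, x ∈ I → ∀ a, x * a ∈ I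

variable {𝒜}

namespace IsHomogeneousRightIdeal

variable {I : AddSubgroup A} {x : A} {γ : Γ}

theorem map_mulLeft (hI : IsHomogeneousRightIdeal 𝒜 I) (hx : x ∈ 𝒜 γ) :
    IsHomogeneousRightIdeal 𝒜 (I.map (AddMonoidHom.mulLeft x)) where
  isHomogeneous δ := by
    rintro _ ⟨y, hy, rfl⟩
    refine ⟨_, hI.isHomogeneous (δ - γ) hy, ?_⟩
    have := coe_decompose_mul_add_of_left_mem 𝒜 (j := δ - γ) (b := y) hx
    rwa [add_sub_cancel, eq_comm] at this
  mul_mem_right := by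
    rintro _ ⟨y, hy, rfl⟩ a
    exact ⟨y * a, hI.mul_mem_right hy a, (mul_assoc x y a).symm⟩

theorem inf_ker_mulLeft (hI : IsHomogeneousRightIdeal 𝒜 I) (hx : x ∈ 𝒜 γ) :
    IsHomogeneousRightIdeal 𝒜 (I ⊓ (AddMonoidHom.mulLeft x).ker) where
  isHomogeneous δ y hy := by
    refine ⟨hI.isHomogeneous δ hy.1, ?_⟩
    have hxy : x * y = 0 := hy.2
    simpa [hxy] using (coe_decompose_mul_add_of_left_mem 𝒜 (j := δ) (b := y) hx).symm
  mul_mem_right y hy a := by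
    refine ⟨hI.mul_mem_right hy.1 a, ?_⟩
    have hxy : x * y = 0 := hy.2
    simp [← mul_assoc, hxy]

end IsHomogeneousRightIdeal

theorem exists_homogeneous_mul_ne_zero (hA : IsGradedSimple 𝒜) {I : AddSubgroup A}
    (hI : IsHomogeneousRightIdeal 𝒜 I) (hI0 : I ≠ ⊥) :
    ∃ γ x, x ∈ 𝒜 γ ∧ x ∈ I ∧ ∃ z ∈ I, x * z ≠ 0 := by
  by_contra! h
  have hII : ∀ x ∈ I, ∀ z ∈ I, x * z = 0 := fun x hx z hz =>
    mul_eq_zero_of_forall_decompose_mul 𝒜 fun γ =>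
      h γ _ (decompose 𝒜 x γ).2 (hI.isHomogeneous γ hx) z hz
  -- the right annihilator of `I` is a homogeneous two-sided ideal, and it contains `I`
  let J : AddSubgroup A := ⨅ x ∈ I, (AddMonoidHom.mulLeft x).ker
  have hJ : ∀ z, z ∈ J ↔ ∀ x ∈ I, x * z = 0 := by simp [J]
  have hJhom : SetLike.IsHomogeneous 𝒜 J := fun γ z hz => (hJ _).2 fun x hx =>
    mul_eq_zero_of_forall_decompose_mul 𝒜 fun μ => by
      rw [← coe_decompose_mul_add_of_left_mem 𝒜 (decompose 𝒜 x μ).2,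
        (hJ z).1 hz _ (hI.isHomogeneous μ hx), decompose_zero, DirectSum.zero_apply,
        ZeroMemClass.coe_zero]
  have hJleft : ∀ a, ∀ z ∈ J, a * z ∈ J := fun a z hz => (hJ _).2 fun x hx => by
    rw [← mul_assoc]; exact (hJ z).1 hz _ (hI.mul_mem_right hx a)
  have hJright : ∀ a, ∀ z ∈ J, z * a ∈ J := fun a z hz => (hJ _).2 fun x hx => by
    rw [← mul_assoc, (hJ z).1 hz x hx, zero_mul]
  rcases hA.2 J hJhom hJleft hJright with hbot | htop
  · exact hI0 (eq_bot_iff.2 fun z hz => hbot ▸ (hJ z).2 fun x hx => hII x hx z hz)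
  · exact hI0 (eq_bot_iff.2 fun x hx => by
      simpa using (hJ 1).1 (htop ▸ AddSubgroup.mem_top 1) x hx)

theorem exists_mul_eq_self_of_minimal {M : AddSubgroup A} (hM : IsHomogeneousRightIdeal 𝒜 M)
    (hmin : ∀ N, IsHomogeneousRightIdeal 𝒜 N → N ≠ ⊥ → N ≤ M → N = M)
    {x : A} {γ : Γ} (hxγ : x ∈ 𝒜 γ) (hxM : x ∈ M) {z : A} (hzM : z ∈ M) (hxz : x * z ≠ 0) :
    ∃ e ∈ M, ∀ y ∈ M, e * y = y := by
  have hxM_eq : M.map (AddMonoidHom.mulLeft x) = M :=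
    hmin _ (hM.map_mulLeft hxγ)
      (AddSubgroup.ne_bot_iff_exists_ne_zero.2 ⟨⟨_, z, hzM, rfl⟩, by simpa using hxz⟩)
      (AddSubgroup.map_le_iff_le_comap.2 fun y hy => hM.mul_mem_right hxM y)
  obtain ⟨e, heM, hxe : x * e = x⟩ := hxM_eq.symm ▸ hxM
  have hker : M ⊓ (AddMonoidHom.mulLeft x).ker = ⊥ := by
    by_contra hne
    have heker : e ∈ M ⊓ (AddMonoidHom.mulLeft x).ker :=
      (hmin _ (hM.inf_ker_mulLeft hxγ) hne inf_le_left).symm ▸ heM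
    exact hxz (by rw [← hxe, show x * e = 0 from heker.2, zero_mul])
  refine ⟨e, heM, fun y hy => ?_⟩
  have hmem : e * y - y ∈ M ⊓ (AddMonoidHom.mulLeft x).ker :=
    ⟨M.sub_mem (hM.mul_mem_right heM y) hy, by simp [mul_sub, ← mul_assoc, hxe]⟩
  rwa [hker, AddSubgroup.mem_bot, sub_eq_zero] at hmem

theorem exists_idempotent_of_minimal {M : AddSubgroup A} (hM : IsHomogeneousRightIdeal 𝒜 M)
    (hmin : ∀ N, IsHomogeneousRightIdeal 𝒜 N → N ≠ ⊥ → N ≤ M → N = M)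
    {x : A} {γ : Γ} (hxγ : x ∈ 𝒜 γ) (hxM : x ∈ M) {z : A} (hzM : z ∈ M) (hxz : x * z ≠ 0) :
    ∃ e ∈ M, e ∈ 𝒜 0 ∧ e ≠ 0 ∧ IsIdempotentElem e := by
  obtain ⟨e, heM, he⟩ := exists_mul_eq_self_of_minimal hM hmin hxγ hxM hzM hxz
  have he₀ := decompose_zero_mul_of_forall_mul_eq_self 𝒜 hM.isHomogeneous he
  have he₀M : (decompose 𝒜 e 0 : A) ∈ M := hM.isHomogeneous 0 heM
  refine ⟨_, he₀M, (decompose 𝒜 e 0).2, fun h0 => ?_, he₀ _ he₀M⟩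
  exact hxz (by rw [← he₀ z hzM, h0, zero_mul, mul_zero])

end GradedRing

section GradedField

variable {Γ K : Type} [AddCommGroup Γ] [DecidableEq Γ] [CommRing K]
  (𝒦 : Γ → AddSubgroup K) [GradedRing 𝒦]

def IsGradedField : Prop :=
  ∀ x : K, x ≠ 0 → SetLike.IsHomogeneousElem 𝒦 x → IsUnit x

variable {𝒦}

namespace IsGradedField

theorem exists_mul_eq_one (hK : IsGradedField 𝒦) {c : K} {γ : Γ} (hc : c ∈ 𝒦 γ)
    (hc0 : c ≠ 0) : ∃ c' ∈ 𝒦 (-γ), c * c' = 1 := by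
  obtain ⟨u, rfl⟩ := hK c hc0 ⟨γ, hc⟩
  refine ⟨decompose 𝒦 (↑u⁻¹ : K) (-γ), (decompose 𝒦 _ _).2, ?_⟩
  rw [← coe_decompose_mul_add_of_left_mem 𝒦 hc, Units.mul_inv, add_neg_cancel,
    decompose_of_mem_same 𝒦 SetLike.GradedOne.one_mem]

theorem exists_forall_eq_mul (hK : IsGradedField 𝒦) (γ : Γ) :
    ∃ u ∈ 𝒦 γ, ∀ c ∈ 𝒦 γ, ∃ f ∈ 𝒦 0, c = f * u := by
  by_cases h : ∀ c ∈ 𝒦 γ, c = 0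
  · exact ⟨0, zero_mem _, fun c hc => ⟨0, zero_mem _, by rw [h c hc, zero_mul]⟩⟩
  obtain ⟨u, hu, hu0⟩ := not_forall₂.1 h
  obtain ⟨u', hu', huu'⟩ := hK.exists_mul_eq_one hu hu0
  refine ⟨u, hu, fun c hc => ⟨c * u', ?_, by rw [mul_assoc, mul_comm u', huu', mul_one]⟩⟩
  simpa using SetLike.mul_mem_graded hc hu'

theorem isField_gradeZero [Nontrivial K] (hK : IsGradedField 𝒦) :
    IsField (SetLike.GradeZero.subring 𝒦) where
  exists_pair_ne := ⟨0, 1, zero_ne_one⟩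
  mul_comm := mul_comm
  mul_inv_cancel := by
    rintro ⟨c, hc⟩ hc0
    obtain ⟨c', hc', hcc'⟩ := hK.exists_mul_eq_one hc fun h => hc0 (Subtype.ext h)
    rw [neg_zero] at hc'
    exact ⟨⟨c', hc'⟩, Subtype.ext hcc'⟩

end IsGradedField

end GradedField

section GradedAlgebra

variable {Γ K A : Type} [AddCommGroup Γ] [CommRing K] [Ring A] [Algebra K A]

theorem smul_mem_of_mul_mem_right {N : AddSubgroup A} (hN : ∀ ⦃x⦄, x ∈ N → ∀ a, x * a ∈ N)
    (c : K) {x : A} (hx : x ∈ N) : c • x ∈ N := by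
  rw [Algebra.smul_def, Algebra.commutes]
  exact hN hx _

theorem span_subset_of_mul_mem_right (S : Subring K) {N : AddSubgroup A}
    (hN : ∀ ⦃x⦄, x ∈ N → ∀ a, x * a ∈ N) : (span S (N : Set A) : Set A) ⊆ N :=
  fun _ hx => span_induction (fun _ h => h) N.zero_mem (fun _ _ _ _ => N.add_mem)
    (fun c _ _ h => smul_mem_of_mul_mem_right hN (c : K) h) hx

variable {𝒦 : Γ → AddSubgroup K} {𝒜 : Γ → AddSubgroup A} [SetLike.GradedSMul 𝒦 𝒜]

theorem smul_mem_graded {c : K} {t : A} {γ δ : Γ} (hc : c ∈ 𝒦 γ) (ht : t ∈ 𝒜 δ) :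
    c • t ∈ 𝒜 (γ + δ) :=
  SetLike.GradedSMul.smul_mem hc ht

variable [DecidableEq Γ] [GradedRing 𝒦] [GradedRing 𝒜]

local notation "𝒦₀" => SetLike.GradeZero.subring 𝒦

theorem coe_decompose_smul_add_of_right_mem (c : K) {t : A} {δ : Γ} (ht : t ∈ 𝒜 δ) (γ : Γ) :
    (decompose 𝒜 (c • t) (γ + δ) : A) = (decompose 𝒦 c γ : K) • t := by
  induction c using DirectSum.Decomposition.inductionOn 𝒦 with
  | zero => simp
  | @homogeneous μ c =>
    have hct : (c : K) • t ∈ 𝒜 (μ + δ) := smul_mem_graded c.2 ht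
    by_cases h : μ = γ
    · subst h
      rw [decompose_of_mem_same 𝒜 hct, decompose_coe, of_eq_same]
    · rw [decompose_of_mem_ne 𝒜 hct (by simpa using h), decompose_of_mem_ne 𝒦 c.2 h, zero_smul]
  | add c c' hc hc' => simp [add_smul, hc, hc']

section HomogeneousSpanningFamily

variable {ι : Type} [Fintype ι] {v : ι → A} {d : ι → Γ}

variable (𝒦) in
theorem exists_coeff_mem_of_mem (hv : ∀ i, v i ∈ 𝒜 (d i)) (hspan : span K (range v) = ⊤)
    {x : A} {γ : Γ} (hx : x ∈ 𝒜 γ) :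
    ∃ c : ι → K, (∀ i, c i ∈ 𝒦 (γ - d i)) ∧ x = ∑ i, c i • v i := by
  obtain ⟨c, hc⟩ := (mem_span_range_iff_exists_fun K).1 (hspan ▸ mem_top : x ∈ span K (range v))
  refine ⟨fun i => decompose 𝒦 (c i) (γ - d i), fun i => (decompose 𝒦 _ _).2, ?_⟩
  calc x = GradedRing.proj 𝒜 γ (∑ i, c i • v i) := by
        rw [hc, GradedRing.proj_apply, decompose_of_mem_same 𝒜 hx]
    _ = ∑ i, (decompose 𝒜 (c i • v i) (γ - d i + d i) : A) := by
        simp only [map_sum, GradedRing.proj_apply]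
        exact Finset.sum_congr rfl fun i _ => by rw [sub_add_cancel]
    _ = _ := Finset.sum_congr rfl fun i _ => coe_decompose_smul_add_of_right_mem _ (hv i) _

theorem exists_isUnit_smul_mem (hK : IsGradedField 𝒦) (hv : ∀ i, v i ∈ 𝒜 (d i))
    (hspan : span K (range v) = ⊤) {y : A} {γ : Γ} (hy : y ∈ 𝒜 γ) (hy0 : y ≠ 0) :
    ∃ i, ∃ u : K, IsUnit u ∧ u • y ∈ 𝒜 (d i) := by
  obtain ⟨c, hc, hyc⟩ := exists_coeff_mem_of_mem 𝒦 hv hspan hy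
  obtain ⟨i, hi⟩ : ∃ i, c i ≠ 0 := by
    by_contra! h
    exact hy0 (by simp [hyc, h])
  obtain ⟨u, hu, hcu⟩ := hK.exists_mul_eq_one (hc i) hi
  refine ⟨i, u, IsUnit.of_mul_eq_one_right _ hcu, ?_⟩
  have := smul_mem_graded hu hy
  rwa [neg_sub, sub_add_cancel] at this

theorem fg_span_gradeZero (hK : IsGradedField 𝒦) (hv : ∀ i, v i ∈ 𝒜 (d i))
    (hspan : span K (range v) = ⊤) (γ : Γ) : (span 𝒦₀ (𝒜 γ : Set A)).FG := by
  choose u hu hgen using fun i => hK.exists_forall_eq_mul (γ - d i)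
  have huv : ∀ i, u i • v i ∈ 𝒜 γ := fun i => by
    simpa using smul_mem_graded (hu i) (hv i)
  suffices span 𝒦₀ (𝒜 γ : Set A) = span 𝒦₀ (range fun i => u i • v i) from
    this ▸ fg_span (finite_range _)
  refine le_antisymm (span_le.2 fun x hx => ?_) (span_mono (range_subset_iff.2 huv))
  obtain ⟨c, hc, rfl⟩ := exists_coeff_mem_of_mem 𝒦 hv hspan hx
  refine sum_mem fun i _ => ?_
  obtain ⟨f, hf, hcf⟩ := hgen i (c i) (hc i)
  rw [hcf, mul_smul]
  exact smul_mem _ (⟨f, hf⟩ : 𝒦₀) (subset_span ⟨i, rfl⟩)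

theorem le_of_forall_mem_grade (hK : IsGradedField 𝒦) (hv : ∀ i, v i ∈ 𝒜 (d i))
    (hspan : span K (range v) = ⊤) {N M : AddSubgroup A} (hN : ∀ ⦃x⦄, x ∈ N → ∀ a, x * a ∈ N)
    (hM : IsHomogeneousRightIdeal 𝒜 M) (h : ∀ i, ∀ x ∈ M, x ∈ 𝒜 (d i) → x ∈ N) : M ≤ N := by
  classical
  have homogeneous : ∀ γ, ∀ y ∈ 𝒜 γ, y ∈ M → y ∈ N := by
    intro γ y hy hyM
    rcases eq_or_ne y 0 with rfl | hy0
    · exact N.zero_mem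
    obtain ⟨i, _, ⟨u, rfl⟩, hui⟩ := exists_isUnit_smul_mem hK hv hspan hy hy0
    have huy : (u : K) • y ∈ N := h i _ (smul_mem_of_mul_mem_right hM.mul_mem_right _ hyM) hui
    simpa [smul_smul] using smul_mem_of_mul_mem_right hN (↑u⁻¹ : K) huy
  intro x hx
  rw [← sum_support_decompose 𝒜 x]
  exact sum_mem fun γ _ => homogeneous γ _ (decompose 𝒜 x γ).2 (hM.isHomogeneous γ hx)

theorem finrank_inf_span_lt [Nontrivial K] (hK : IsGradedField 𝒦) (hv : ∀ i, v i ∈ 𝒜 (d i))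
    (hspan : span K (range v) = ⊤) {N M : AddSubgroup A} (hN : ∀ ⦃x⦄, x ∈ N → ∀ a, x * a ∈ N)
    (hM : IsHomogeneousRightIdeal 𝒜 M) (hNM : N < M) :
    finrank 𝒦₀ ↥(span 𝒦₀ (⋃ i, (𝒜 (d i) : Set A)) ⊓ span 𝒦₀ (N : Set A)) <
      finrank 𝒦₀ ↥(span 𝒦₀ (⋃ i, (𝒜 (d i) : Set A)) ⊓ span 𝒦₀ (M : Set A)) := by
  let := hK.isField_gradeZero.toField
  have hW : (span 𝒦₀ (⋃ i, (𝒜 (d i) : Set A))).FG := by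
    rw [span_iUnion]
    exact fg_iSup _ fun i => fg_span_gradeZero hK hv hspan (d i)
  set W := span 𝒦₀ (⋃ i, (𝒜 (d i) : Set A))
  have : FiniteDimensional 𝒦₀ W := Module.Finite.iff_fg.2 hW
  have := Submodule.finiteDimensional_of_le (inf_le_left : W ⊓ span 𝒦₀ (M : Set A) ≤ W)
  refine Submodule.finrank_lt_finrank_of_lt <|
    lt_of_le_of_ne (inf_le_inf_left _ (span_mono hNM.le)) fun h => hNM.not_ge ?_
  refine le_of_forall_mem_grade hK hv hspan hN hM fun i x hxM hx => ?_
  have : x ∈ W ⊓ span 𝒦₀ (M : Set A) := ⟨subset_span (mem_iUnion_of_mem i hx), subset_span hxM⟩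
  exact span_subset_of_mul_mem_right _ hN (h ▸ this).2

end HomogeneousSpanningFamily

variable (K 𝒜) in
theorem exists_homogeneous_span_eq_top [Module.Finite K A] :
    ∃ (ι : Type) (_ : Fintype ι) (v : ι → A) (d : ι → Γ),
      (∀ i, v i ∈ 𝒜 (d i)) ∧ span K (range v) = ⊤ := by
  classical
  obtain ⟨n, s, hs⟩ := Module.Finite.exists_fin (R := K) (M := A)
  refine ⟨Σ i : Fin n, (decompose 𝒜 (s i)).support, inferInstance,
    fun p => decompose 𝒜 (s p.1) p.2, fun p => p.2, fun p => (decompose 𝒜 _ _).2, ?_⟩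
  rw [eq_top_iff, ← hs, span_le]
  rintro _ ⟨i, rfl⟩
  rw [← sum_support_decompose 𝒜 (s i)]
  exact sum_mem fun γ hγ => subset_span ⟨⟨i, γ, hγ⟩, rfl⟩

theorem exists_minimal_homogeneousRightIdeal [Nontrivial K] [Module.Finite K A]
    (hK : IsGradedField 𝒦) (P : AddSubgroup A → Prop) {I : AddSubgroup A}
    (hI : IsHomogeneousRightIdeal 𝒜 I) (hPI : P I) :
    ∃ M, IsHomogeneousRightIdeal 𝒜 M ∧ P M ∧
      ∀ N, IsHomogeneousRightIdeal 𝒜 N → P N → ¬N < M := by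
  obtain ⟨ι, _, v, d, hv, hspan⟩ := exists_homogeneous_span_eq_top K 𝒜
  let rank (N : AddSubgroup A) : ℕ :=
    finrank 𝒦₀ ↥(span 𝒦₀ (⋃ i, (𝒜 (d i) : Set A)) ⊓ span 𝒦₀ (N : Set A))
  obtain ⟨M, ⟨hM, hPM⟩, hmin⟩ :=
    (InvImage.wf rank wellFounded_lt).has_min {M | IsHomogeneousRightIdeal 𝒜 M ∧ P M} ⟨I, hI, hPI⟩
  exact ⟨M, hM, hPM, fun N hN hPN hNM =>
    hmin N ⟨hN, hPN⟩ (finrank_inf_span_lt hK hv hspan hN.mul_mem_right hM hNM)⟩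

theorem exists_idempotent_mem [Module.Finite K A] (hK : IsGradedField 𝒦)
    (hA : IsGradedSimple 𝒜) {I : AddSubgroup A} (hI : IsHomogeneousRightIdeal 𝒜 I)
    (hI0 : I ≠ ⊥) : ∃ e ∈ I, e ∈ 𝒜 0 ∧ e ≠ 0 ∧ IsIdempotentElem e := by
  have := hA.1
  have := (algebraMap K A).domain_nontrivial
  obtain ⟨M, hM, ⟨hM0, hMI⟩, hmin⟩ :=
    exists_minimal_homogeneousRightIdeal hK (fun N => N ≠ ⊥ ∧ N ≤ I) hI ⟨hI0, le_rfl⟩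
  obtain ⟨γ, x, hxγ, hxM, z, hzM, hxz⟩ := exists_homogeneous_mul_ne_zero hA hM hM0
  have hMmin : ∀ N, IsHomogeneousRightIdeal 𝒜 N → N ≠ ⊥ → N ≤ M → N = M :=
    fun N hN hN0 hNM => hNM.eq_of_not_lt (hmin N hN ⟨hN0, hNM.trans hMI⟩)
  obtain ⟨e, heM, he⟩ := exists_idempotent_of_minimal hM hMmin hxγ hxM hzM hxz
  exact ⟨e, hMI heM, he⟩

theorem exists_idempotent_forall_mem_iff [Module.Finite K A] (hK : IsGradedField 𝒦)
    (hA : IsGradedSimple 𝒜) {I : AddSubgroup A} (hI : IsHomogeneousRightIdeal 𝒜 I) :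
    ∃ e : A, e ∈ 𝒜 0 ∧ IsIdempotentElem e ∧ ∀ x, x ∈ I ↔ ∃ a, x = e * a := by
  have := hA.1
  have := (algebraMap K A).domain_nontrivial
  -- choose `e` with `{y ∈ I | e * y = 0}`, a complement of `e * A` in `I`, minimal
  obtain ⟨_, hM, ⟨e, heI, he0, he, rfl⟩, hmin⟩ := exists_minimal_homogeneousRightIdeal hK
    (fun N => ∃ e ∈ I, e ∈ 𝒜 0 ∧ IsIdempotentElem e ∧ N = I ⊓ (AddMonoidHom.mulLeft e).ker) hI
    ⟨0, I.zero_mem, zero_mem _, .zero, by ext; simp⟩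
  refine ⟨e, he0, he, mem_iff_exists_eq_mul_of_inf_ker_eq_bot hI.mul_mem_right heI he ?_⟩
  by_contra hne
  obtain ⟨f, ⟨hfI, hef : e * f = 0⟩, hf0, hf_ne, hf⟩ := exists_idempotent_mem hK hA hM hne
  set e' := e + f - f * e
  have he'0 : e' ∈ 𝒜 0 := sub_mem (add_mem he0 hf0) (by simpa using SetLike.mul_mem_graded hf0 he0)
  have hee' : e * e' = e := by simp [e', mul_add, mul_sub, he.eq, hef, ← mul_assoc]
  have he'f : e' * f = f := by simp [e', add_mul, sub_mul, hef, hf.eq, mul_assoc]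
  refine hmin _ (hI.inf_ker_mulLeft he'0)
    ⟨e', sub_mem (add_mem heI hfI) (hI.mul_mem_right hfI e), he'0,
      IsIdempotentElem.add_sub_mul_of_mul_eq_zero he hf hef, rfl⟩ (lt_of_le_of_ne ?_ fun h => ?_)
  · rintro y ⟨hyI, hy : e' * y = 0⟩
    exact ⟨hyI, show e * y = 0 by rw [← hee', mul_assoc, hy, mul_zero]⟩
  · have : f ∈ I ⊓ (AddMonoidHom.mulLeft e').ker := h ▸ ⟨hfI, hef⟩
    exact hf_ne (he'f ▸ this.2)

end GradedAlgebra

theorem statement_9_general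
    {Γ : Type} [AddCommGroup Γ] [LinearOrder Γ]
    {K : Type} [CommRing K] (𝒦 : Γ → AddSubgroup K) [GradedRing 𝒦]
    (hKfield : ∀ x : K, x ≠ 0 → (∃ γ : Γ, x ∈ 𝒦 γ) → IsUnit x)
    {A : Type} [Ring A] [Algebra K A] [Module.Finite K A]
    (𝒜 : Γ → AddSubgroup A) [GradedRing 𝒜]
    (halg : ∀ (γ : Γ), ∀ c ∈ 𝒦 γ, algebraMap K A c ∈ 𝒜 γ)
    (hsimple : Nontrivial A ∧
      ∀ S : AddSubgroup A,
        (∀ x ∈ S, ∀ γ : Γ, ((DirectSum.decompose 𝒜 x γ : 𝒜 γ) : A) ∈ S) →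
        (∀ a : A, ∀ x ∈ S, a * x ∈ S) → (∀ a : A, ∀ x ∈ S, x * a ∈ S) →
        S = ⊥ ∨ S = ⊤)
    (I : AddSubgroup A)
    (hIhom : ∀ x ∈ I, ∀ γ : Γ, ((DirectSum.decompose 𝒜 x γ : 𝒜 γ) : A) ∈ I)
    (hIright : ∀ a : A, ∀ x ∈ I, x * a ∈ I) :
    ∃ e : A, e ∈ 𝒜 0 ∧ IsIdempotentElem e ∧ ∀ x : A, x ∈ I ↔ ∃ a : A, x = e * a := by
  have : SetLike.GradedSMul 𝒦 𝒜 := ⟨fun γ δ c t hc ht => by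
    rw [Algebra.smul_def]
    exact SetLike.mul_mem_graded (halg γ c hc) ht⟩
  exact exists_idempotent_forall_mem_iff hKfield
    ⟨hsimple.1, fun S hS => hsimple.2 S fun x hx γ => hS γ hx⟩
    ⟨fun γ x hx => hIhom x hx γ, fun x hx a => hIright a x hx⟩

/-- **Statement 9** (`ideal.lem`).
Let `𝖠` be a graded simple algebra, finite-dimensional over a graded field `𝖪` (all
gradings by a divisible totally ordered abelian group `Γ`), and let `I ⊆ 𝖠` be a
homogeneous right ideal.  Then there is a homogeneous idempotent `e ∈ 𝖠` of degree `0`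
such that `I = e𝖠`. -/
theorem statement_9
    {Γ : Type} [AddCommGroup Γ] [LinearOrder Γ] [IsOrderedAddMonoid Γ]
    (hΓ : ∀ n : ℕ, n ≠ 0 → ∀ γ : Γ, ∃ δ : Γ, n • δ = γ)
    {K : Type} [CommRing K] (𝒦 : Γ → AddSubgroup K) [GradedRing 𝒦]
    (hKfield : ∀ x : K, x ≠ 0 → (∃ γ : Γ, x ∈ 𝒦 γ) → IsUnit x)
    {A : Type} [Ring A] [Algebra K A] [Module.Finite K A]
    (𝒜 : Γ → AddSubgroup A) [GradedRing 𝒜]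
    (halg : ∀ (γ : Γ), ∀ c ∈ 𝒦 γ, algebraMap K A c ∈ 𝒜 γ)
    (hsimple : Nontrivial A ∧
      ∀ S : AddSubgroup A,
        (∀ x ∈ S, ∀ γ : Γ, ((DirectSum.decompose 𝒜 x γ : 𝒜 γ) : A) ∈ S) →
        (∀ a : A, ∀ x ∈ S, a * x ∈ S) → (∀ a : A, ∀ x ∈ S, x * a ∈ S) →
        S = ⊥ ∨ S = ⊤)
    (I : AddSubgroup A)
    (hIhom : ∀ x ∈ I, ∀ γ : Γ, ((DirectSum.decompose 𝒜 x γ : 𝒜 γ) : A) ∈ I)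
    (hIright : ∀ a : A, ∀ x ∈ I, x * a ∈ I) :
    ∃ e : A, e ∈ 𝒜 0 ∧ IsIdempotentElem e ∧ ∀ x : A, x ∈ I ↔ ∃ a : A, x = e * a :=
  statement_9_general 𝒦 hKfield 𝒜 halg hsimple I hIhom hIright

end PaperVal
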